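/- Let n ≥ 2 and 0 ≤ m ≤ n−2, and let Γ ⊆ ℝⁿ be an open symmetric cone contained in the (m+1)-positive cone Γ_{m+1}ⁿ, such that w + v ∈ Γ whenever w ∈ Γ and v ∈ ℝⁿ has all entries nonnegative, and such that e_m := (0,…,0,1,…,1) (m zeros followed by n−m ones) lies in Γ. Let f : Γ → ℝ be symmetric, strictly increasing in each argument, and positively homogeneous of degree one, with f(e_m) > 0; set c_m := f(e_m)⁻¹. If z ∈ Γ satisfies 0 ≤ z₁ ≤ z₂ ≤ … ≤ z_n, f(z) > 0, and z_n ≤ c_m f(z), then either z₁ + … + z_m > 0, or else z₁ = … = z_m = 0 and z_{m+1} = … = z_n > 0. -/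
import Mathlib

private lemma aux_f_mono_le {n : ℕ} {Γ : Set (Fin n → ℝ)}
    (hΓ_up : ∀ w ∈ Γ, ∀ v : Fin n → ℝ, (∀ i, 0 ≤ v i) → w + v ∈ Γ)
    {f : (Fin n → ℝ) → ℝ}
    (hf_mono : ∀ w ∈ Γ, ∀ t : ℝ, 0 < t → ∀ i : Fin n,
        w + Pi.single i t ∈ Γ → f w < f (w + Pi.single i t))
    (w : Fin n → ℝ) (hw : w ∈ Γ) (v : Fin n → ℝ) (hv : ∀ i, 0 ≤ v i) :
    f w ≤ f (w + v) := by
  have key : ∀ s : Finset (Fin n), f w ≤ f (w + ∑ i ∈ s, Pi.single i (v i)) := by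
    intro s
    induction s using Finset.induction_on with
    | empty => simp
    | @insert a s ha ih =>
      rw [Finset.sum_insert ha]
      have hs_nonneg : ∀ i, 0 ≤ (∑ j ∈ s, Pi.single j (v j)) i := by
        intro i
        rw [Finset.sum_apply]
        refine Finset.sum_nonneg fun j _ => ?_
        rcases eq_or_ne i j with rfl | hne
        · simp [hv i]
        · simp [Pi.single_apply, hne]
      have hmem : w + ∑ j ∈ s, Pi.single j (v j) ∈ Γ := hΓ_up w hw _ hs_nonneg
      rcases eq_or_lt_of_le (hv a) with h | h
      · rw [← h, Pi.single_zero, zero_add]; exact ih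
      · have hsingle_nonneg : ∀ i, (0 : ℝ) ≤ (Pi.single a (v a) : Fin n → ℝ) i := by
          intro i
          rcases eq_or_ne i a with rfl | hne
          · simpa using h.le
          · simp [Pi.single_apply, hne]
        have hmem2 : (w + ∑ j ∈ s, Pi.single j (v j)) + Pi.single a (v a) ∈ Γ :=
          hΓ_up _ hmem _ hsingle_nonneg
        have hlt := hf_mono _ hmem (v a) h a hmem2
        have harg : w + (Pi.single a (v a) + ∑ j ∈ s, Pi.single j (v j))
            = (w + ∑ j ∈ s, Pi.single j (v j)) + Pi.single a (v a) := by ring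
        rw [harg]
        exact le_of_lt (lt_of_le_of_lt ih hlt)
  have := key Finset.univ
  simpa [Finset.univ_sum_single] using this

private lemma aux_f_mono_lt {n : ℕ} {Γ : Set (Fin n → ℝ)}
    (hΓ_up : ∀ w ∈ Γ, ∀ v : Fin n → ℝ, (∀ i, 0 ≤ v i) → w + v ∈ Γ)
    {f : (Fin n → ℝ) → ℝ}
    (hf_mono : ∀ w ∈ Γ, ∀ t : ℝ, 0 < t → ∀ i : Fin n,
        w + Pi.single i t ∈ Γ → f w < f (w + Pi.single i t))
    (w : Fin n → ℝ) (hw : w ∈ Γ) (v : Fin n → ℝ) (hv : ∀ i, 0 ≤ v i)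
    (j : Fin n) (hj : 0 < v j) : f w < f (w + v) := by
  have hsingle_nonneg : ∀ i, (0 : ℝ) ≤ (Pi.single j (v j) : Fin n → ℝ) i := by
    intro i
    rcases eq_or_ne i j with rfl | hne
    · simpa using hj.le
    · simp [Pi.single_apply, hne]
  have hmem2 : w + Pi.single j (v j) ∈ Γ := hΓ_up w hw _ hsingle_nonneg
  have h1 : f w < f (w + Pi.single j (v j)) := hf_mono w hw (v j) hj j hmem2
  have hrest_nonneg : ∀ i, 0 ≤ (v - (Pi.single j (v j) : Fin n → ℝ)) i := by
    intro i
    rcases eq_or_ne i j with rfl | hne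
    · simp
    · simp [Pi.single_apply, hne, hv i]
  have h2 : f (w + Pi.single j (v j)) ≤
      f ((w + Pi.single j (v j)) + (v - Pi.single j (v j))) :=
    aux_f_mono_le hΓ_up hf_mono _ hmem2 _ hrest_nonneg
  have harg : (w + Pi.single j (v j)) + (v - Pi.single j (v j)) = w + v := by ring
  rw [harg] at h2
  exact lt_of_lt_of_le h1 h2

/-- Rigidity underlying the cylindrical estimates for concave speeds: a weakly
convex point with `κ_n ≤ c_m F` is either `m`-strictly convex or an exact
`m`-cylindrical point. -/
theorem cylindrical_rigidity_concave_speeds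
    (n m : ℕ) (hn : 2 ≤ n) (hm : m ≤ n - 2)
    (Γ : Set (Fin n → ℝ))
    (hΓ_open : IsOpen Γ)
    (hΓ_cone : ∀ c : ℝ, 0 < c → ∀ z ∈ Γ, c • z ∈ Γ)
    (hΓ_symm : ∀ σ : Equiv.Perm (Fin n), ∀ z ∈ Γ, (fun i => z (σ i)) ∈ Γ)
    (hΓ_sub : ∀ z ∈ Γ, ∀ S : Finset (Fin n), S.card = m + 1 → 0 < ∑ i ∈ S, z i)
    (hΓ_up : ∀ w ∈ Γ, ∀ v : Fin n → ℝ, (∀ i, 0 ≤ v i) → w + v ∈ Γ)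
    (heΓ : (fun i : Fin n => if (i : ℕ) < m then (0 : ℝ) else 1) ∈ Γ)
    (f : (Fin n → ℝ) → ℝ)
    (hf_symm : ∀ σ : Equiv.Perm (Fin n), ∀ z ∈ Γ, f (fun i => z (σ i)) = f z)
    (hf_mono : ∀ w ∈ Γ, ∀ t : ℝ, 0 < t → ∀ i : Fin n,
        w + Pi.single i t ∈ Γ → f w < f (w + Pi.single i t))
    (hf_hom : ∀ c : ℝ, 0 < c → ∀ z ∈ Γ, f (c • z) = c * f z)
    (hfe : 0 < f (fun i : Fin n => if (i : ℕ) < m then (0 : ℝ) else 1))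
    (z : Fin n → ℝ) (hzΓ : z ∈ Γ) (hz_sorted : Monotone z)
    (hz₁ : 0 ≤ z ⟨0, by omega⟩) (hfz : 0 < f z)
    (hpinch : z ⟨n - 1, by omega⟩ ≤
        (f (fun i : Fin n => if (i : ℕ) < m then (0 : ℝ) else 1))⁻¹ * f z) :
    (0 < ∑ i ∈ Finset.univ.filter (fun i : Fin n => (i : ℕ) < m), z i) ∨
      ((∀ i : Fin n, (i : ℕ) < m → z i = 0) ∧
        ∃ c : ℝ, 0 < c ∧ ∀ i : Fin n, m ≤ (i : ℕ) → z i = c) := by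
  by_cases hpos : 0 < ∑ i ∈ Finset.univ.filter (fun i : Fin n => (i : ℕ) < m), z i
  · exact Or.inl hpos
  right
  have hz_nonneg : ∀ i, 0 ≤ z i := by
    intro i
    exact le_trans hz₁ (hz_sorted (by simp [Fin.le_def]))
  have hsum0 : ∑ i ∈ Finset.univ.filter (fun i : Fin n => (i : ℕ) < m), z i = 0 :=
    le_antisymm (not_lt.mp hpos) (Finset.sum_nonneg fun i _ => hz_nonneg i)
  have hzero : ∀ i : Fin n, (i : ℕ) < m → z i = 0 := by
    intro i hi
    exact (Finset.sum_eq_zero_iff_of_nonneg (fun i _ => hz_nonneg i)).mp hsum0 i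
      (by simp [hi])
  have hm1 : m + 1 < n := by omega
  set M : Fin n := ⟨m, by omega⟩ with hM
  set N : Fin n := ⟨n - 1, by omega⟩ with hN
  -- the filter of indices < m+1 is Iio ⟨m+1, _⟩
  have hfilter : Finset.univ.filter (fun i : Fin n => (i : ℕ) < m + 1)
      = Finset.Iio (⟨m + 1, hm1⟩ : Fin n) := by
    ext i
    simp [Finset.mem_Iio, Fin.lt_def]
  have hcard : (Finset.univ.filter (fun i : Fin n => (i : ℕ) < m + 1)).card = m + 1 := by
    rw [hfilter, Fin.card_Iio]
  have hsplit : Finset.univ.filter (fun i : Fin n => (i : ℕ) < m + 1)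
      = insert M (Finset.univ.filter (fun i : Fin n => (i : ℕ) < m)) := by
    ext i
    simp [hM, Fin.ext_iff]
    omega
  have hMnot : M ∉ Finset.univ.filter (fun i : Fin n => (i : ℕ) < m) := by
    simp [hM]
  have hsumM : ∑ i ∈ Finset.univ.filter (fun i : Fin n => (i : ℕ) < m + 1), z i = z M := by
    rw [hsplit, Finset.sum_insert hMnot, hsum0, add_zero]
  have hzM : 0 < z M := by
    have := hΓ_sub z hzΓ _ hcard
    rwa [hsumM] at this
  have hMN : M ≤ N := by simp [hM, hN, Fin.le_def]; omega
  set lam := z N with hlam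
  have hlam_pos : 0 < lam := lt_of_lt_of_le hzM (hz_sorted hMN)
  set e : Fin n → ℝ := fun i : Fin n => if (i : ℕ) < m then (0 : ℝ) else 1 with he
  have hz_le : ∀ i, z i ≤ lam := by
    intro i
    exact hz_sorted (show i ≤ N by simp [hN, Fin.le_def]; omega)
  have hv_nonneg : ∀ i, 0 ≤ (lam • e - z) i := by
    intro i
    simp only [Pi.sub_apply, Pi.smul_apply, smul_eq_mul, he]
    by_cases hi : (i : ℕ) < m
    · simp [hi, hzero i hi]
    · simp [hi]
      exact hz_le i
  have hfw : f (lam • e) = lam * f e := hf_hom lam hlam_pos e heΓ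
  have hkey : lam * f e ≤ f z := by
    have h1 : f e * lam ≤ f e * ((f e)⁻¹ * f z) :=
      mul_le_mul_of_nonneg_left hpinch hfe.le
    rw [← mul_assoc, mul_inv_cancel₀ (ne_of_gt hfe), one_mul] at h1
    linarith [h1]
  have hconst : ∀ i : Fin n, m ≤ (i : ℕ) → z i = lam := by
    intro i hi
    by_contra hne
    have hlt : z i < lam := lt_of_le_of_ne (hz_le i) hne
    have hvi : 0 < (lam • e - z) i := by
      simp only [Pi.sub_apply, Pi.smul_apply, smul_eq_mul, he]
      simp [not_lt.mpr hi]
      linarith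
    have hstrict : f z < f (z + (lam • e - z)) :=
      aux_f_mono_lt hΓ_up hf_mono z hzΓ _ hv_nonneg i hvi
    have harg : z + (lam • e - z) = lam • e := by abel
    rw [harg, hfw] at hstrict
    linarith
  exact ⟨hzero, lam, hlam_pos, hconst⟩
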